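/- Recursion (K1a): for every σ ∈ {0,1,…,r}^N and every integer k with 1 ≤ k ≤ r-1, 𝐠(σ·k·0) = (t^{l+1} + a)·𝐠((k-1)·σ), where l = #{i : σ_i < r}, σ·k·0 denotes σ with the entries k and then 0 appended, and (k-1)·σ denotes σ with the entry k-1 prepended. -/

import Mathlib

open MvPolynomial

noncomputable section

/-- The field `F = ℚ(q,a,t)` of rational functions in three variables over `ℚ`. -/
abbrev KRF : Type := FractionRing (MvPolynomial (Fin 3) ℚ)

/-- The variable `q` in `F`. -/
def fq : KRF := algebraMap (MvPolynomial (Fin 3) ℚ) KRF (X 0)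
/-- The variable `a` in `F`. -/
def fa : KRF := algebraMap (MvPolynomial (Fin 3) ℚ) KRF (X 1)
/-- The variable `t` in `F`. -/
def ft : KRF := algebraMap (MvPolynomial (Fin 3) ℚ) KRF (X 2)

/-- The number `|v|` of ones in a binary sequence. -/
def onesCt (v : List Bool) : ℕ := v.count true

/-- A p-family: a function on (balanced) pairs of binary sequences with values in
`F = ℚ(q,a,t)` satisfying the five recursion rules (1)-(5). -/
def IsPFamily (p : List Bool → List Bool → KRF) : Prop :=
  (∀ n : ℕ, p [] (List.replicate n false) = ((1 + fa) / (1 - fq)) ^ n) ∧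
  (∀ m : ℕ, p (List.replicate m false) [] = ((1 + fa) / (1 - fq)) ^ m) ∧
  (∀ v w : List Bool, onesCt v = onesCt w →
      p (v ++ [true]) (w ++ [true]) = (ft ^ onesCt v + fa) * p v w) ∧
  (∀ v w : List Bool, onesCt v = onesCt w + 1 →
      p (v ++ [false]) (w ++ [true]) = p v (true :: w)) ∧
  (∀ v w : List Bool, onesCt v + 1 = onesCt w →
      p (v ++ [true]) (w ++ [false]) = p (true :: v) w) ∧
  (∀ v w : List Bool, onesCt v = onesCt w →
      p (v ++ [false]) (w ++ [false]) =
        ft ^ (-(onesCt v : ℤ)) * p (true :: v) (true :: w) +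
          fq * ft ^ (-(onesCt v : ℤ)) * p (false :: v) (false :: w))

/-- The symbols `1`, `0`, `∗` used in fillings. -/
inductive Symb : Type
  | one : Symb
  | zero : Symb
  | star : Symb
deriving DecidableEq

/-- An admissible filling of the `r × N` grid (rows indexed top-to-bottom by `Fin r`,
columns left-to-right by `Fin N`): every row and every column contains at most one `1`,
every cell strictly below a `1` in the same column is `∗`, and every other cell is `0`
(i.e. every `∗` lies strictly below a `1` in its column). -/
def IsAdmissible {r N : ℕ} (T : Fin r → Fin N → Symb) : Prop :=
  (∀ (i : Fin r) (j j' : Fin N), T i j = Symb.one → T i j' = Symb.one → j = j') ∧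
  (∀ (j : Fin N) (i i' : Fin r), T i j = Symb.one → T i' j = Symb.one → i = i') ∧
  (∀ (i i' : Fin r) (j : Fin N), T i j = Symb.one → i < i' → T i' j = Symb.star) ∧
  (∀ (i : Fin r) (j : Fin N), T i j = Symb.star → ∃ i' : Fin r, i' < i ∧ T i' j = Symb.one)

/-- `σ(T)_j`: the number of cells labeled `0` in the `j`-th column of `T`. -/
def colZeros {r N : ℕ} (T : Fin r → Fin N → Symb) (j : Fin N) : ℕ :=
  (Finset.univ.filter (fun i => T i j = Symb.zero)).card

/-- `v(T)_j = 1` iff the `j`-th column of `T` is occupied (contains a `1`). -/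
def vFun {r N : ℕ} (T : Fin r → Fin N → Symb) (j : Fin N) : Bool :=
  decide (∃ i : Fin r, T i j = Symb.one)

/-- The binary sequence `v(T)` as a list. -/
def vList {r N : ℕ} (T : Fin r → Fin N → Symb) : List Bool :=
  (List.finRange N).map (vFun T)

/-- The binary sequence `w(T)`: read the entries of `T` from left to right along each row,
taking the rows from bottom to top, skipping all cells labeled `∗` (with `1 ↦ true`,
`0 ↦ false`). -/
def wList {r N : ℕ} (T : Fin r → Fin N → Symb) : List Bool :=
  ((List.finRange r).reverse.map (fun i =>
    (List.finRange N).filterMap (fun j =>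
      match T i j with
      | Symb.one => some true
      | Symb.zero => some false
      | Symb.star => none))).flatten

/-!
An admissible filling is determined column by column by its zero counts: a column with `s`
zeros reads `0^s`, then `1` if `s < r`, then `∗`s. Hence `v(σ·k·0) = v(σ)·1·1` and
`v((k-1)·σ) = 1·v(σ)`. Reading the rows from bottom to top, the cell which the column `k`
of `σ·k·0` contributes to row `i + 1` lands exactly where the column `k - 1` of `(k-1)·σ`
contributes to row `i`, while the top row of `σ·k·0`, read last, ends in `0·1`; so
`w(σ·k·0) = w((k-1)·σ)·0·1`. Rule (4) moves the last `1` of `v(σ)·1·1` to the front and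
rule (2) then strips the final pair of `1`s, producing the factor `t^{l+1} + a`, as `1·v(σ)`
has `l + 1` ones.
-/

-- The filling `T(σ)` has `columnCell (σ j) i` in row `i` (counted from the top) of column `j`.
def columnCell (s i : ℕ) : Symb :=
  if i < s then Symb.zero else if i = s then Symb.one else Symb.star

lemma columnCell_eq_one {s i : ℕ} : columnCell s i = Symb.one ↔ i = s := by
  unfold columnCell; split_ifs <;> simp <;> omega

def cellWord (s i : ℕ) : List Bool :=
  if i < s then [false] else if i = s then [true] else []

def rowWord {M : ℕ} (σ : Fin M → ℕ) (i : ℕ) : List Bool :=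
  (List.finRange M).flatMap fun j => cellWord (σ j) i

def vWord {M : ℕ} (r : ℕ) (σ : Fin M → ℕ) : List Bool :=
  (List.finRange M).map fun j => decide (σ j < r)

def wWord {M : ℕ} (r : ℕ) (σ : Fin M → ℕ) : List Bool :=
  (List.range r).reverse.flatMap (rowWord σ)

lemma countP_finRange_eq_sum {n : ℕ} (p : Fin n → Bool) :
    (List.finRange n).countP p = ∑ i, if p i then 1 else 0 := by
  rw [Fin.sum_univ_def]
  induction List.finRange n with
  | nil => rfl
  | cons a l ih => by_cases h : p a <;> simp [ih, h, add_comm]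

section Admissible

variable {r M : ℕ} {T : Fin r → Fin M → Symb}

lemma colZeros_eq_of_column {j : Fin M} {s : ℕ} (hs : s ≤ r)
    (h : ∀ i, T i j = columnCell s i) : colZeros T j = s := by
  have hzero : ∀ i : Fin r, columnCell s i = Symb.zero ↔ (i : ℕ) < s := by
    intro i; unfold columnCell; split_ifs <;> simp_all
  simp only [colZeros, h, hzero, Fin.card_filter_val_lt, min_eq_right hs]

lemma IsAdmissible.column_eq_of_one (hT : IsAdmissible T) {i₀ : Fin r} {j : Fin M}
    (h : T i₀ j = Symb.one) (i : Fin r) : T i j = columnCell i₀ i := by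
  obtain ⟨-, huniq, hbelow, hstar⟩ := hT
  rcases lt_trichotomy i i₀ with hlt | rfl | hgt
  · have : T i j = Symb.zero := by
      cases e : T i j with
      | one => exact absurd (huniq j i i₀ e h) hlt.ne
      | zero => rfl
      | star =>
        obtain ⟨i', hi', h'⟩ := hstar i j e
        exact absurd (huniq j i' i₀ h' h) (hi'.trans hlt).ne
    simp [columnCell, this, Fin.lt_def.mp hlt]
  · simp [columnCell, h]
  · have := Fin.lt_def.mp hgt
    simp [columnCell, hbelow i₀ i j h hgt, this.ne', not_lt.mpr this.le]

lemma IsAdmissible.column_eq_zero (hT : IsAdmissible T) {j : Fin M}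
    (h : ∀ i, T i j ≠ Symb.one) (i : Fin r) : T i j = Symb.zero := by
  cases e : T i j with
  | one => exact absurd e (h i)
  | zero => rfl
  | star =>
    obtain ⟨i', -, h'⟩ := hT.2.2.2 i j e
    exact absurd h' (h i')

lemma IsAdmissible.eq_columnCell (hT : IsAdmissible T) (i : Fin r) (j : Fin M) :
    T i j = columnCell (colZeros T j) i := by
  obtain ⟨s, hs, hcol⟩ : ∃ s ≤ r, ∀ i, T i j = columnCell s i := by
    by_cases hone : ∃ i₀, T i₀ j = Symb.one
    · obtain ⟨i₀, h⟩ := hone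
      exact ⟨i₀, i₀.isLt.le, hT.column_eq_of_one h⟩
    · push Not at hone
      exact ⟨r, le_rfl, fun i => by simp [hT.column_eq_zero hone i, columnCell]⟩
  rw [colZeros_eq_of_column hs hcol, hcol]

lemma IsAdmissible.vList_eq (hT : IsAdmissible T) : vList T = vWord r (colZeros T) := by
  refine List.map_congr_left fun j _ => ?_
  simp only [vFun, hT.eq_columnCell _ j, columnCell_eq_one, decide_eq_decide]
  exact ⟨fun ⟨i, hi⟩ => hi ▸ i.isLt, fun h => ⟨⟨_, h⟩, rfl⟩⟩

lemma IsAdmissible.wList_eq (hT : IsAdmissible T) : wList T = wWord r (colZeros T) := by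
  have hcell : ∀ s i : ℕ, (match columnCell s i with
      | Symb.one => some true
      | Symb.zero => some false
      | Symb.star => none).toList = cellWord s i := by
    intro s i; unfold columnCell cellWord; split_ifs <;> rfl
  simp only [wList, wWord, hT.eq_columnCell, List.filterMap_eq_flatMap_toList, hcell]
  rw [← List.flatMap_def, ← List.map_coe_finRange_eq_range, ← List.map_reverse,
    List.flatMap_map]
  rfl

lemma onesCt_wList_eq_onesCt_vList
    (hcol : ∀ (j : Fin M) (i i' : Fin r), T i j = Symb.one → T i' j = Symb.one → i = i') :
    onesCt (wList T) = onesCt (vList T) := by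
  have hrow : ∀ i, onesCt ((List.finRange M).filterMap fun j =>
      match T i j with
      | Symb.one => some true
      | Symb.zero => some false
      | Symb.star => none) = ∑ j, if T i j = Symb.one then 1 else 0 := by
    intro i
    rw [onesCt, List.count_filterMap, countP_finRange_eq_sum]
    refine Finset.sum_congr rfl fun j _ => ?_
    cases T i j <;> rfl
  have hcolumn : ∀ j, (∑ i, if T i j = Symb.one then 1 else 0) = if vFun T j then 1 else 0 := by
    intro j
    by_cases hone : ∃ i₀, T i₀ j = Symb.one
    · obtain ⟨i₀, h⟩ := hone
      have : ∀ i, T i j = Symb.one ↔ i = i₀ :=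
        fun i => ⟨fun hi => hcol j i i₀ hi h, fun e => e ▸ h⟩
      simp [this, vFun]
    · simp_all [vFun]
  calc onesCt (wList T) = ∑ i, ∑ j, if T i j = Symb.one then 1 else 0 := by
        rw [onesCt, wList, List.count_flatten, List.map_map, List.map_reverse, List.sum_reverse,
          Fin.sum_univ_def]
        exact congrArg List.sum (List.map_congr_left fun i _ => hrow i)
    _ = ∑ j, ∑ i, if T i j = Symb.one then 1 else 0 := Finset.sum_comm
    _ = ∑ j, if vFun T j then 1 else 0 := Finset.sum_congr rfl fun j _ => hcolumn j
    _ = onesCt (vList T) := by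
        rw [onesCt, vList, List.count_eq_countP, List.countP_map, countP_finRange_eq_sum]
        simp

end Admissible

lemma rowWord_cons {M : ℕ} (c : ℕ) (σ : Fin M → ℕ) (i : ℕ) :
    rowWord (Fin.cons c σ : Fin (M + 1) → ℕ) i = cellWord c i ++ rowWord σ i := by
  simp [rowWord, List.finRange_succ, List.flatMap_map]

lemma rowWord_snoc {M : ℕ} (σ : Fin M → ℕ) (c : ℕ) (i : ℕ) :
    rowWord (Fin.snoc σ c : Fin (M + 1) → ℕ) i = rowWord σ i ++ cellWord c i := by
  simp [rowWord, List.finRange_succ_last, List.flatMap_map]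

lemma flatMap_rows_shift (R : ℕ → List Bool) {k : ℕ} (hk : 1 ≤ k) (m : ℕ) :
    (List.range (m + 1)).reverse.flatMap (fun i => R i ++ cellWord k i ++ cellWord 0 i)
      = R m ++ (List.range m).reverse.flatMap (fun i => cellWord (k - 1) i ++ R i)
        ++ [false, true] := by
  induction m with
  | zero => simp [cellWord, show 0 < k by omega]
  | succ m ih =>
    have hshift : cellWord k (m + 1) = cellWord (k - 1) m := by
      unfold cellWord; split_ifs <;> first | rfl | omega
    rw [List.range_succ, List.reverse_append, List.flatMap_append, ih, List.range_succ,
      List.reverse_append]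
    simp only [List.reverse_singleton, List.flatMap_singleton, hshift]
    simp [cellWord]

lemma wWord_snoc_snoc_zero {N r k : ℕ} (σ : Fin N → ℕ) (hk : 1 ≤ k) (hkr : k < r) :
    wWord r (Fin.snoc (Fin.snoc σ k : Fin (N + 1) → ℕ) 0 : Fin (N + 2) → ℕ)
      = wWord r (Fin.cons (k - 1) σ : Fin (N + 1) → ℕ) ++ [false, true] := by
  obtain ⟨m, rfl⟩ : ∃ m, r = m + 1 := ⟨r - 1, by omega⟩
  have hlast : cellWord (k - 1) m = [] := by
    unfold cellWord; rw [if_neg (by omega), if_neg (by omega)]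
  have h1 : rowWord (Fin.snoc (Fin.snoc σ k : Fin (N + 1) → ℕ) 0 : Fin (N + 2) → ℕ)
      = fun i => rowWord σ i ++ cellWord k i ++ cellWord 0 i :=
    funext fun i => by rw [rowWord_snoc, rowWord_snoc]
  have h2 : rowWord (Fin.cons (k - 1) σ : Fin (N + 1) → ℕ)
      = fun i => cellWord (k - 1) i ++ rowWord σ i :=
    funext (rowWord_cons _ σ)
  rw [wWord, wWord, h1, h2, flatMap_rows_shift _ hk, List.range_succ, List.reverse_append]
  simp [hlast]

lemma vWord_snoc {M r c : ℕ} (σ : Fin M → ℕ) (hc : c < r) :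
    vWord r (Fin.snoc σ c : Fin (M + 1) → ℕ) = vWord r σ ++ [true] := by
  simp [vWord, List.finRange_succ_last, hc]

lemma vWord_cons {M r c : ℕ} (σ : Fin M → ℕ) (hc : c < r) :
    vWord r (Fin.cons c σ : Fin (M + 1) → ℕ) = true :: vWord r σ := by
  simp [vWord, List.finRange_succ, hc]

lemma onesCt_vWord {M : ℕ} (r : ℕ) (σ : Fin M → ℕ) :
    onesCt (vWord r σ) = (Finset.univ.filter fun j => σ j < r).card := by
  rw [Fin.univ_def, onesCt, vWord, List.count_eq_countP, List.countP_map]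
  simp [Finset.filter, Finset.card, List.countP_eq_length_filter, Function.comp_def]

lemma IsPFamily.apply_append_one_one {p : List Bool → List Bool → KRF} (hp : IsPFamily p)
    {v w : List Bool} (h : onesCt v + 1 = onesCt w) :
    p (v ++ [true, true]) (w ++ [false, true, false])
      = (ft ^ (onesCt v + 1) + fa) * p (true :: v) (w ++ [false]) := by
  obtain ⟨-, -, hmatch, -, hmove, -⟩ := hp
  have hcount : ∀ l : List Bool, onesCt (l ++ [true]) = onesCt l + 1 ∧
      onesCt (l ++ [false]) = onesCt l ∧ onesCt (true :: l) = onesCt l + 1 := by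
    simp [onesCt]
  calc p (v ++ [true, true]) (w ++ [false, true, false])
      = p ((v ++ [true]) ++ [true]) ((w ++ [false] ++ [true]) ++ [false]) := by simp
    _ = p ((true :: v) ++ [true]) ((w ++ [false]) ++ [true]) :=
        hmove _ _ (by simp only [hcount]; omega)
    _ = (ft ^ (onesCt v + 1) + fa) * p (true :: v) (w ++ [false]) := by
        rw [hmatch _ _ (by simp only [hcount]; omega), (hcount v).2.2]

theorem g_recursion_K1a_general (p : List Bool → List Bool → KRF) (hp : IsPFamily p)
    (r : ℕ) (N : ℕ) (σ : Fin N → ℕ)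
    (k : ℕ) (hk1 : 1 ≤ k) (hk2 : k ≤ r - 1)
    (T1 : Fin r → Fin (N + 2) → Symb) (hT1 : IsAdmissible T1)
    (hT1σ : ∀ j, colZeros T1 j = (Fin.snoc (Fin.snoc σ k : Fin (N + 1) → ℕ) 0 : Fin (N + 2) → ℕ) j)
    (T2 : Fin r → Fin (N + 1) → Symb) (hT2 : IsAdmissible T2)
    (hT2σ : ∀ j, colZeros T2 j = (Fin.cons (k - 1) σ : Fin (N + 1) → ℕ) j) :
    p (vList T1) (wList T1 ++ [false]) =
      (ft ^ ((Finset.univ.filter (fun i => σ i < r)).card + 1) + fa) *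
        p (vList T2) (wList T2 ++ [false]) := by
  have hkr : k < r := by omega
  have hv1 : vList T1 = vWord r σ ++ [true, true] := by
    rw [hT1.vList_eq, funext hT1σ, vWord_snoc _ (by omega : 0 < r), vWord_snoc _ hkr,
      List.append_assoc]
    rfl
  have hv2 : vList T2 = true :: vWord r σ := by
    rw [hT2.vList_eq, funext hT2σ, vWord_cons _ (by omega)]
  have hw : wList T1 = wList T2 ++ [false, true] := by
    rw [hT1.wList_eq, hT2.wList_eq, funext hT1σ, funext hT2σ, wWord_snoc_snoc_zero σ hk1 hkr]
  have hbalanced : onesCt (vWord r σ) + 1 = onesCt (wList T2) := by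
    rw [onesCt_wList_eq_onesCt_vList hT2.2.1, hv2]
    simp [onesCt]
  rw [hv1, hw, List.append_assoc, ← onesCt_vWord, hv2]
  exact hp.apply_append_one_one hbalanced

/-- Recursion (K1a): `𝐠(σ·k·0) = (t^{l+1} + a)·𝐠((k-1)·σ)` for `1 ≤ k ≤ r-1`, where
`l = #{i : σ_i < r}`.  Here `𝐠(σ) = p(v(σ), w(σ)·0)`, with `T1` (resp. `T2`) the unique
admissible filling whose column-zero-counts are `σ·k·0` (i.e. `Fin.snoc (Fin.snoc σ k) 0`)
(resp. `(k-1)·σ`, i.e. `Fin.cons (k-1) σ`). -/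
theorem g_recursion_K1a (p : List Bool → List Bool → KRF) (hp : IsPFamily p)
    (r : ℕ) (hr : 1 ≤ r) (N : ℕ) (σ : Fin N → ℕ) (hσ : ∀ i, σ i ≤ r)
    (k : ℕ) (hk1 : 1 ≤ k) (hk2 : k ≤ r - 1)
    (T1 : Fin r → Fin (N + 2) → Symb) (hT1 : IsAdmissible T1)
    (hT1σ : ∀ j, colZeros T1 j = (Fin.snoc (Fin.snoc σ k : Fin (N + 1) → ℕ) 0 : Fin (N + 2) → ℕ) j)
    (T2 : Fin r → Fin (N + 1) → Symb) (hT2 : IsAdmissible T2)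
    (hT2σ : ∀ j, colZeros T2 j = (Fin.cons (k - 1) σ : Fin (N + 1) → ℕ) j) :
    p (vList T1) (wList T1 ++ [false]) =
      (ft ^ ((Finset.univ.filter (fun i => σ i < r)).card + 1) + fa) *
        p (vList T2) (wList T2 ++ [false]) :=
  g_recursion_K1a_general p hp r N σ k hk1 hk2 T1 hT1 hT1σ T2 hT2 hT2σ
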